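/- arXiv:2505.19524 — 3 statements merged into one kernel-verified Lean document; each statement's English description precedes it below -/
import Mathlib

section
/- Let Γ be a compact subset of the lower half-plane ℝ²₋, σ a finite Borel measure on Γ, and H : Ŝ × Γ → ℂ a bounded measurable function. Suppose T is the integral operator on L²(Ŝ) with kernel t(β, α) = Q(β) ∫_Γ e^{−i k₋ v(β)·y} H(α, y) dσ(y) (sound-soft factorized kernel), and suppose f ∈ L²(Ŝ) and λ ∈ ℂ, λ ≠ 0, satisfy T f = λ f. Define h₁(y) = λ^{−1} ∫_Ŝ H(α, y) f(α) ds_α for y ∈ Γ. Then: (i) f(β) = Q(β) ∫_Γ e^{−i k₋ v(β)·y} h₁(y) dσ(y) for almost every β ∈ Ŝ; and (ii) the transmitted Herglotz field u_f^{trans}(x) = ∫_Ŝ f(β) Q(β) e^{i k₋ v(β)·x} ds_β satisfies u_f^{trans}(x) = ∫_Γ B₀(x − y) h₁(y) dσ(y) for every x ∈ ℝ². -/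
noncomputable section
open MeasureTheory Real Set

abbrev R2 : Type := EuclideanSpace ℝ (Fin 2)

def thetaC (kp km : ℝ) : ℝ := if km < kp then Real.arccos (km / kp) else 0

def Sarc (kp km : ℝ) : Set ℝ :=
  Set.Ioo (Real.pi + thetaC kp km) (2 * Real.pi - thetaC kp km)

def Tarc (kp km : ℝ) : Set ℝ :=
  Set.Ioo (thetaC kp km) (Real.pi - thetaC kp km)

def vdir (kp km θ : ℝ) : Fin 2 → ℝ := fun i =>
  if i = 0 then (kp / km) * Real.cos θ
  else Real.sign (Real.sin θ) * Real.sqrt (1 - (kp / km) ^ 2 * (Real.cos θ) ^ 2)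

def Qco (kp km θ : ℝ) : ℝ :=
  2 * (kp / km) * Real.sin θ / ((kp / km) * Real.sin θ + vdir kp km θ 1)

def dotp (u : Fin 2 → ℝ) (y : R2) : ℝ := u 0 * y 0 + u 1 * y 1

def B0 (kp km : ℝ) (y : R2) : ℂ :=
  ∫ θ in Sarc kp km, (Qco kp km θ : ℂ) ^ 2 *
    Complex.exp (Complex.I * (km : ℂ) * ((dotp (vdir kp km θ) y : ℝ) : ℂ))

/- ## auxiliary lemmas -/

lemma aux_measurable_sign : Measurable Real.sign := by
  have : Real.sign = fun r : ℝ => if r < 0 then (-1:ℝ) else if 0 < r then 1 else 0 := by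
    funext r; rfl
  rw [this]
  exact Measurable.ite (measurableSet_lt measurable_id measurable_const) measurable_const
    (Measurable.ite (measurableSet_lt measurable_const measurable_id) measurable_const
      measurable_const)

lemma aux_measurable_vdir1 (kp km : ℝ) : Measurable (fun θ => vdir kp km θ 1) := by
  unfold vdir
  simp only [Fin.isValue, one_ne_zero, if_false]
  exact (aux_measurable_sign.comp Real.continuous_sin.measurable).mul
    ((continuous_const.sub (continuous_const.mul (Real.continuous_cos.pow 2))).sqrt.measurable)

lemma aux_measurable_vdir0 (kp km : ℝ) : Measurable (fun θ => vdir kp km θ 0) := by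
  unfold vdir
  simp only [Fin.isValue, if_true, reduceIte]
  exact (continuous_const.mul Real.continuous_cos).measurable

lemma aux_measurable_Qco (kp km : ℝ) : Measurable (Qco kp km) := by
  unfold Qco
  exact ((measurable_const.mul Real.continuous_sin.measurable)).div
    ((measurable_const.mul Real.continuous_sin.measurable).add (aux_measurable_vdir1 kp km))

lemma aux_abs_Qco_le (kp km : ℝ) (hkp : 0 < kp) (hkm : 0 < km) (θ : ℝ) :
    |Qco kp km θ| ≤ 2 := by
  have hm : 0 < kp / km := div_pos hkp hkm
  unfold Qco vdir
  simp only [Fin.isValue, one_ne_zero, if_false]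
  set m := kp / km
  set t := Real.sqrt (1 - m ^ 2 * Real.cos θ ^ 2) with ht
  have ht0 : 0 ≤ t := Real.sqrt_nonneg _
  rcases lt_trichotomy (Real.sin θ) 0 with h | h | h
  · rw [Real.sign_of_neg h]
    have ha : m * Real.sin θ < 0 := mul_neg_of_pos_of_neg hm h
    have hd : m * Real.sin θ + (-1) * t < 0 := by nlinarith
    rw [abs_div, abs_of_neg hd, abs_of_neg (by nlinarith : 2 * m * Real.sin θ < 0)]
    rw [div_le_iff₀ (by linarith)]
    nlinarith
  · rw [h, Real.sign_zero]
    simp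
  · rw [Real.sign_of_pos h]
    have ha : 0 < m * Real.sin θ := mul_pos hm h
    have hd : 0 < m * Real.sin θ + 1 * t := by nlinarith
    rw [abs_div, abs_of_pos hd, abs_of_pos (by nlinarith : 0 < 2 * m * Real.sin θ)]
    rw [div_le_iff₀ hd]
    nlinarith

lemma aux_norm_exp_I_mul (a r : ℝ) : ‖Complex.exp (Complex.I * (a:ℂ) * (r:ℂ))‖ = 1 := by
  rw [Complex.norm_exp]
  simp [Complex.mul_re]

lemma aux_norm_exp_neg_I_mul (a r : ℝ) :
    ‖Complex.exp (-(Complex.I * (a:ℂ) * (r:ℂ)))‖ = 1 := by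
  rw [Complex.norm_exp]
  simp [Complex.mul_re]

instance aux_fvol (kp km : ℝ) : IsFiniteMeasure (volume.restrict (Sarc kp km)) := by
  constructor
  rw [Measure.restrict_apply_univ]
  simp [Sarc, Real.volume_Ioo]

lemma aux_dotp_sub (u : Fin 2 → ℝ) (x y : R2) :
    dotp u (x - y) = dotp u x - dotp u y := by
  simp only [dotp]
  have h0 : (x - y) 0 = x 0 - y 0 := rfl
  have h1 : (x - y) 1 = x 1 - y 1 := rfl
  rw [h0, h1]; ring

/-- global focusing, sound-soft case: if `T` is the integral operator on `L²(Ŝ)`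
with the factorized kernel `t(β, α) = Q(β) ∫_Γ e^{−i k₋ v(β)·y} H(α, y) dσ(y)` and
`T f = λ f` with `λ ≠ 0`, then with `h₁(y) = λ⁻¹ ∫_Ŝ H(α, y) f(α) ds_α` one has
(i) `f(β) = Q(β) ∫_Γ e^{−i k₋ v(β)·y} h₁(y) dσ(y)` a.e., and (ii) the transmitted Herglotz
field satisfies `u_f^{trans}(x) = ∫_Γ B₀(x − y) h₁(y) dσ(y)` for every `x`. -/
theorem stmt4_global_focusing_soft (kp km : ℝ) (hkp : 0 < kp) (hkm : 0 < km) (hne : kp ≠ km)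
    (Γ : Set R2) (hΓcompact : IsCompact Γ) (hΓlower : ∀ y ∈ Γ, y 1 < 0)
    (σ : Measure R2) [IsFiniteMeasure σ]
    (H : ℝ → R2 → ℂ) (hHmeas : Measurable (Function.uncurry H))
    (hHbdd : ∃ C : ℝ, ∀ α y, ‖H α y‖ ≤ C)
    (f : ℝ → ℂ) (hf : MemLp f 2 (volume.restrict (Sarc kp km)))
    (lam : ℂ) (hlam : lam ≠ 0)
    (heig : ∀ᵐ β ∂(volume.restrict (Sarc kp km)),
      lam * f β = ∫ α in Sarc kp km,
        ((Qco kp km β : ℂ) * ∫ y in Γ,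
          Complex.exp (-(Complex.I * (km : ℂ) * ((dotp (vdir kp km β) y : ℝ) : ℂ))) * H α y ∂σ)
          * f α) :
    (∀ᵐ β ∂(volume.restrict (Sarc kp km)),
      f β = (Qco kp km β : ℂ) * ∫ y in Γ,
        Complex.exp (-(Complex.I * (km : ℂ) * ((dotp (vdir kp km β) y : ℝ) : ℂ))) *
          (lam⁻¹ * ∫ α in Sarc kp km, H α y * f α) ∂σ) ∧
    (∀ x : R2,
      (∫ β in Sarc kp km, f β * (Qco kp km β : ℂ) *
          Complex.exp (Complex.I * (km : ℂ) * ((dotp (vdir kp km β) x : ℝ) : ℂ)))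
        = ∫ y in Γ, B0 kp km (x - y) * (lam⁻¹ * ∫ α in Sarc kp km, H α y * f α) ∂σ) := by
  obtain ⟨C₀, hC₀⟩ := hHbdd
  set C : ℝ := max C₀ 0 with hCdef
  have hC : ∀ α y, ‖H α y‖ ≤ C := fun α y => (hC₀ α y).trans (le_max_left _ _)
  have hC0 : 0 ≤ C := le_max_right _ _
  set μS := volume.restrict (Sarc kp km) with hμS
  set μΓ := σ.restrict Γ with hμΓ
  set Q : ℝ → ℂ := fun β => ((Qco kp km β : ℝ) : ℂ) with hQdef
  have hQnorm : ∀ β, ‖Q β‖ ≤ 2 := fun β => by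
    simpa [hQdef, Complex.norm_real] using aux_abs_Qco_le kp km hkp hkm β
  set eneg : ℝ → R2 → ℂ := fun β y =>
    Complex.exp (-(Complex.I * (km : ℂ) * ((dotp (vdir kp km β) y : ℝ) : ℂ))) with henegdef
  set S : R2 → ℂ := fun y => ∫ α in Sarc kp km, H α y * f α with hSdef
  have hfInt : Integrable f μS := hf.integrable one_le_two
  -- measurability of dotp in y
  have cont_dotp : ∀ u : Fin 2 → ℝ, Continuous (fun y : R2 => dotp u y) := by
    intro u
    unfold dotp
    exact (continuous_const.mul (PiLp.continuous_apply 2 _ 0)).add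
      (continuous_const.mul (PiLp.continuous_apply 2 _ 1))
  -- measurability of S
  have hSm : AEStronglyMeasurable S μΓ := by
    have h1 : AEStronglyMeasurable (fun z : R2 × ℝ => H z.2 z.1 * f z.2) (μΓ.prod μS) := by
      refine AEStronglyMeasurable.mul ?_ (hf.aestronglyMeasurable.comp_snd)
      exact (hHmeas.comp measurable_swap).aestronglyMeasurable
    exact h1.integral_prod_right'
  -- bound on S
  set Cf : ℝ := C * ∫ α in Sarc kp km, ‖f α‖ with hCfdef
  have hSbdd : ∀ y, ‖S y‖ ≤ Cf := by
    intro y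
    calc ‖S y‖ ≤ ∫ α in Sarc kp km, C * ‖f α‖ := by
          refine norm_integral_le_of_norm_le (hfInt.norm.const_mul C) (ae_of_all _ fun α => ?_)
          rw [norm_mul]
          exact mul_le_mul_of_nonneg_right (hC α y) (norm_nonneg _)
      _ = Cf := integral_const_mul C _
  -- key pointwise identity
  have hkey : ∀ β : ℝ,
      (∫ α in Sarc kp km, ((Q β) * ∫ y in Γ, eneg β y * H α y ∂σ) * f α)
        = Q β * ∫ y in Γ, eneg β y * S y ∂σ := by
    intro β
    have hInt : Integrable (Function.uncurry fun α y => eneg β y * (H α y * f α))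
        (μS.prod μΓ) := by
      have h1 : Integrable (fun z : ℝ × R2 => f z.1 * (1:ℂ)) (μS.prod μΓ) :=
        hfInt.mul_prod (integrable_const 1)
      simp only [mul_one] at h1
      have hm : AEStronglyMeasurable (fun z : ℝ × R2 => eneg β z.2 * H z.1 z.2)
          (μS.prod μΓ) := by
        refine (Measurable.mul ?_ hHmeas).aestronglyMeasurable
        exact ((Complex.continuous_exp.comp
          ((continuous_const.mul ((Complex.continuous_ofReal.comp
            (cont_dotp (vdir kp km β))))).neg)).comp continuous_snd).measurable
      have h2 := h1.bdd_mul hm (c := C) (ae_of_all _ fun z => by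
        rw [norm_mul, aux_norm_exp_neg_I_mul, one_mul]; exact hC z.1 z.2)
      have heq : (fun z : ℝ × R2 => (eneg β z.2 * H z.1 z.2) * f z.1)
          = Function.uncurry fun α y => eneg β y * (H α y * f α) := by
        funext z; simp [Function.uncurry]; ring
      rwa [heq] at h2
    have step1 : ∀ α, ((∫ y in Γ, eneg β y * H α y ∂σ) * f α)
        = ∫ y in Γ, eneg β y * (H α y * f α) ∂σ := by
      intro α
      rw [← integral_mul_const]
      simp_rw [mul_assoc]
    calc (∫ α in Sarc kp km, ((Q β) * ∫ y in Γ, eneg β y * H α y ∂σ) * f α)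
        = Q β * ∫ α in Sarc kp km, (∫ y in Γ, eneg β y * H α y ∂σ) * f α := by
          simp_rw [mul_assoc]
          rw [integral_const_mul]
      _ = Q β * ∫ α in Sarc kp km, ∫ y in Γ, eneg β y * (H α y * f α) ∂σ := by
          simp_rw [step1]
      _ = Q β * ∫ y in Γ, (∫ α in Sarc kp km, eneg β y * (H α y * f α)) ∂σ := by
          congr 1
          exact integral_integral_swap hInt
      _ = Q β * ∫ y in Γ, eneg β y * S y ∂σ := by
          simp_rw [integral_const_mul]; rfl
  -- part (i)
  have part1 : ∀ᵐ β ∂μS,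
      f β = Q β * ∫ y in Γ, eneg β y * (lam⁻¹ * S y) ∂σ := by
    filter_upwards [heig] with β hβ
    have hlf : lam * f β = Q β * ∫ y in Γ, eneg β y * S y ∂σ := by
      rw [hβ]; exact hkey β
    have e1 : ∀ y : R2, eneg β y * (lam⁻¹ * S y) = lam⁻¹ * (eneg β y * S y) := by
      intro y; ring
    calc f β = lam⁻¹ * (lam * f β) := by
          field_simp
      _ = lam⁻¹ * (Q β * ∫ y in Γ, eneg β y * S y ∂σ) := by rw [hlf]
      _ = Q β * ∫ y in Γ, eneg β y * (lam⁻¹ * S y) ∂σ := by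
          simp_rw [e1, integral_const_mul]; ring
  refine ⟨part1, ?_⟩
  -- part (ii)
  intro x
  set epos : ℝ → ℂ := fun β =>
    Complex.exp (Complex.I * (km : ℂ) * ((dotp (vdir kp km β) x : ℝ) : ℂ)) with heposdef
  set h1 : R2 → ℂ := fun y => lam⁻¹ * S y with hh1def
  set E : ℝ → R2 → ℂ := fun β y =>
    Complex.exp (Complex.I * (km : ℂ) * ((dotp (vdir kp km β) (x - y) : ℝ) : ℂ)) with hEdef
  have hQ2int : Integrable (fun β => (Q β) ^ 2) μS := by
    have hone : Integrable (fun _ : ℝ => (1 : ℂ)) μS := integrable_const 1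
    have h2 := hone.bdd_mul
      (((Complex.measurable_ofReal.comp (aux_measurable_Qco kp km)).pow_const 2).aestronglyMeasurable)
      (c := 4) (ae_of_all _ fun β => by
        rw [norm_pow]
        have h3 : ‖(Complex.ofReal ∘ Qco kp km) β‖ ≤ 2 := by
          simpa [Function.comp, Complex.norm_real] using aux_abs_Qco_le kp km hkp hkm β
        nlinarith [norm_nonneg ((Complex.ofReal ∘ Qco kp km) β)])
    simpa [Function.comp] using h2
  have hh1int : Integrable h1 μΓ := by
    have hone : Integrable (fun _ : R2 => (1 : ℂ)) μΓ := integrable_const 1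
    have h2 := hone.bdd_mul (hSm.const_mul lam⁻¹)
      (c := ‖lam⁻¹‖ * Cf) (ae_of_all _ fun y => by
        rw [norm_mul]
        exact mul_le_mul_of_nonneg_left (hSbdd y) (norm_nonneg _))
    simpa using h2
  have hexpm : Measurable (fun z : ℝ × R2 => E z.1 z.2) := by
    apply Complex.continuous_exp.measurable.comp
    apply Measurable.const_mul
    apply Complex.measurable_ofReal.comp
    show Measurable (fun z : ℝ × R2 =>
      vdir kp km z.1 0 * (x 0 - z.2 0) + vdir kp km z.1 1 * (x 1 - z.2 1))
    exact (((aux_measurable_vdir0 kp km).comp measurable_fst).mul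
        (measurable_const.sub (((PiLp.continuous_apply 2 _ (0 : Fin 2)).comp continuous_snd).measurable))).add
      (((aux_measurable_vdir1 kp km).comp measurable_fst).mul
        (measurable_const.sub (((PiLp.continuous_apply 2 _ (1 : Fin 2)).comp continuous_snd).measurable)))
  have hIntii : Integrable (Function.uncurry fun β y => (Q β) ^ 2 * E β y * h1 y)
      (μS.prod μΓ) := by
    have base := hQ2int.mul_prod hh1int
    have h2 := base.bdd_mul hexpm.aestronglyMeasurable
      (c := 1) (ae_of_all _ fun z => le_of_eq (aux_norm_exp_I_mul km _))
    have heq : (fun z : ℝ × R2 => E z.1 z.2 * ((Q z.1) ^ 2 * h1 z.2))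
        = Function.uncurry fun β y => (Q β) ^ 2 * E β y * h1 y := by
      funext z; simp only [Function.uncurry]; ring
    rwa [heq] at h2
  have hexpcomb : ∀ (β : ℝ) (y : R2), epos β * eneg β y = E β y := by
    intro β y
    rw [heposdef, henegdef, hEdef]
    simp only
    rw [← Complex.exp_add]
    congr 1
    rw [aux_dotp_sub]
    push_cast
    ring
  have step2 : ∀ β : ℝ, (Q β * ∫ y in Γ, eneg β y * h1 y ∂σ) * Q β * epos β
      = ∫ y in Γ, (Q β) ^ 2 * E β y * h1 y ∂σ := by
    intro β
    rw [show (Q β * ∫ y in Γ, eneg β y * h1 y ∂σ) * Q β * epos β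
        = ((Q β) ^ 2 * epos β) * ∫ y in Γ, eneg β y * h1 y ∂σ by ring]
    rw [← integral_const_mul]
    refine integral_congr_ae (ae_of_all _ fun y => ?_)
    show Q β ^ 2 * epos β * (eneg β y * h1 y) = Q β ^ 2 * E β y * h1 y
    rw [← hexpcomb β y]
    ring
  show (∫ β in Sarc kp km, f β * Q β * epos β) = ∫ y in Γ, B0 kp km (x - y) * h1 y ∂σ
  calc (∫ β in Sarc kp km, f β * Q β * epos β)
      = ∫ β in Sarc kp km, (Q β * ∫ y in Γ, eneg β y * h1 y ∂σ) * Q β * epos β := by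
        refine integral_congr_ae ?_
        filter_upwards [part1] with β hβ
        rw [hβ]
    _ = ∫ β in Sarc kp km, ∫ y in Γ, (Q β) ^ 2 * E β y * h1 y ∂σ := by
        simp_rw [step2]
    _ = ∫ y in Γ, (∫ β in Sarc kp km, (Q β) ^ 2 * E β y) * h1 y ∂σ := by
        rw [show (∫ β in Sarc kp km, ∫ y in Γ, (Q β) ^ 2 * E β y * h1 y ∂σ)
            = ∫ y in Γ, (∫ β in Sarc kp km, (Q β) ^ 2 * E β y * h1 y) ∂σ from
          integral_integral_swap hIntii]
        refine integral_congr_ae (ae_of_all _ fun y => ?_)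
        exact integral_mul_const _ _
    _ = ∫ y in Γ, B0 kp km (x - y) * h1 y ∂σ := rfl
end
end

section
/- Let Γ be a compact subset of the lower half-plane ℝ²₋, σ a finite Borel measure on Γ, ν : Γ → ℝ² a measurable field of unit vectors, and H : Ŝ × Γ → ℂ a bounded measurable function. Suppose T is the integral operator on L²(Ŝ) with kernel t(β, α) = Q(β) ∫_Γ (−i k₋ ν(y)·v(β)) e^{−i k₋ v(β)·y} H(α, y) dσ(y) (sound-hard factorized kernel), and suppose f ∈ L²(Ŝ) and λ ∈ ℂ, λ ≠ 0, satisfy T f = λ f. Define h₂(y) = λ^{−1} ∫_Ŝ H(α, y) f(α) ds_α for y ∈ Γ. Then the transmitted Herglotz field u_f^{trans}(x) = ∫_Ŝ f(β) Q(β) e^{i k₋ v(β)·x} ds_β satisfies u_f^{trans}(x) = −i k₋ ∫_Γ ν(y) · B₁(x − y) h₂(y) dσ(y) for every x ∈ ℝ². -/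
noncomputable section
open MeasureTheory Real Set

/-- `B₁(y) = ∫_Ŝ v(α) Q(α)² e^{i k₋ v(α)·y} ds_α ∈ ℂ²`. -/
def B1 (kp km : ℝ) (y : R2) : EuclideanSpace ℂ (Fin 2) :=
  ∫ θ in Sarc kp km, (WithLp.equiv 2 (Fin 2 → ℂ)).symm
    (fun i => ((vdir kp km θ i : ℝ) : ℂ) * (Qco kp km θ : ℂ) ^ 2 *
      Complex.exp (Complex.I * (km : ℂ) * ((dotp (vdir kp km θ) y : ℝ) : ℂ)))

namespace Aux5

lemma measurable_rsign : Measurable Real.sign := by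
  have h : Real.sign = fun r : ℝ => if r < 0 then (-1 : ℝ) else if 0 < r then 1 else 0 := by
    funext r; rfl
  rw [h]
  exact Measurable.ite (measurableSet_lt measurable_id measurable_const) measurable_const
    (Measurable.ite (measurableSet_lt measurable_const measurable_id) measurable_const
      measurable_const)

lemma measurable_vdir (kp km : ℝ) (i : Fin 2) : Measurable fun θ => vdir kp km θ i := by
  unfold vdir
  by_cases h : i = 0
  · simp only [if_pos h]
    exact measurable_const.mul Real.measurable_cos
  · simp only [if_neg h]
    exact (measurable_rsign.comp Real.measurable_sin).mul
      ((measurable_const.sub ((Real.measurable_cos.pow_const 2).const_mul _)).sqrt)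

lemma measurable_Qco (kp km : ℝ) : Measurable (Qco kp km) := by
  unfold Qco
  exact ((Real.measurable_sin.const_mul _)).div
    ((Real.measurable_sin.const_mul _).add (measurable_vdir kp km 1))

lemma abs_vdir0_le (kp km θ : ℝ) : |vdir kp km θ 0| ≤ |kp / km| := by
  simp only [vdir, if_true, abs_mul]
  calc |kp / km| * |Real.cos θ| ≤ |kp / km| * 1 :=
        mul_le_mul_of_nonneg_left (Real.abs_cos_le_one θ) (abs_nonneg _)
    _ = |kp / km| := mul_one _

lemma abs_vdir1_le (kp km θ : ℝ) : |vdir kp km θ 1| ≤ 1 := by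
  have h1 : (1 : Fin 2) ≠ 0 := by decide
  simp only [vdir, if_neg h1, abs_mul]
  have hs : |Real.sign (Real.sin θ)| ≤ 1 := by
    rcases Real.sign_apply_eq (Real.sin θ) with h | h | h <;> rw [h] <;> norm_num
  have hq : |Real.sqrt (1 - (kp / km) ^ 2 * Real.cos θ ^ 2)| ≤ 1 := by
    rw [abs_of_nonneg (Real.sqrt_nonneg _)]
    apply Real.sqrt_le_one.mpr
    nlinarith [sq_nonneg (kp / km * Real.cos θ), sq_nonneg (kp/km), sq_nonneg (Real.cos θ)]
  calc |Real.sign (Real.sin θ)| * |Real.sqrt _| ≤ 1 * 1 :=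
        mul_le_mul hs hq (abs_nonneg _) zero_le_one
    _ = 1 := one_mul 1

lemma coord_le_norm (w : R2) (i : Fin 2) : |w i| ≤ ‖w‖ := by
  rw [EuclideanSpace.norm_eq, ← Real.sqrt_sq_eq_abs]
  apply Real.sqrt_le_sqrt
  have := Finset.single_le_sum (f := fun j => ‖w j‖ ^ 2) (fun j _ => sq_nonneg _)
    (Finset.mem_univ i)
  simpa [Real.norm_eq_abs, sq_abs] using this

lemma abs_dotp_le (kp km θ : ℝ) (w : R2) :
    |dotp (vdir kp km θ) w| ≤ (|kp / km| + 1) * ‖w‖ := by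
  have h0 := abs_vdir0_le kp km θ
  have h1 := abs_vdir1_le kp km θ
  have c0 := coord_le_norm w 0
  have c1 := coord_le_norm w 1
  have := abs_add_le (vdir kp km θ 0 * w 0) (vdir kp km θ 1 * w 1)
  rw [abs_mul, abs_mul] at this
  unfold dotp
  nlinarith [abs_nonneg (vdir kp km θ 0), abs_nonneg (vdir kp km θ 1), abs_nonneg (w 0),
    abs_nonneg (w 1), norm_nonneg w, abs_nonneg (kp/km)]

lemma sin_neg_on_Sarc (kp km : ℝ) {θ : ℝ} (hθ : θ ∈ Sarc kp km) : Real.sin θ < 0 := by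
  have hc : 0 ≤ thetaC kp km := by
    unfold thetaC; split
    · exact Real.arccos_nonneg _
    · exact le_refl 0
  obtain ⟨h1, h2⟩ := hθ
  have h := Real.sin_neg_of_neg_of_neg_pi_lt (x := θ - 2 * Real.pi) (by linarith) (by linarith)
  rwa [Real.sin_sub_two_pi] at h

lemma abs_Qco_le (kp km : ℝ) (hkp : 0 < kp) (hkm : 0 < km) {θ : ℝ} (hθ : θ ∈ Sarc kp km) :
    |Qco kp km θ| ≤ 2 := by
  have hs := sin_neg_on_Sarc kp km hθ
  have hμ : 0 < kp / km := div_pos hkp hkm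
  have h1 : (1 : Fin 2) ≠ 0 := by decide
  unfold Qco vdir
  simp only [if_neg h1]
  rw [Real.sign_of_neg hs]
  set s := Real.sin θ with hsdef
  set t := Real.sqrt (1 - (kp / km) ^ 2 * Real.cos θ ^ 2) with ht
  have ht0 : 0 ≤ t := Real.sqrt_nonneg _
  have hden : kp / km * s + -1 * t < 0 := by nlinarith
  rw [abs_div, div_le_iff₀ (abs_pos.mpr hden.ne)]
  rw [abs_of_neg hden, abs_of_neg (by nlinarith : 2 * (kp / km) * s < 0)]
  nlinarith

lemma norm_exp_I_mul (km r : ℝ) : ‖Complex.exp (Complex.I * (km : ℂ) * (r : ℂ))‖ = 1 := by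
  rw [Complex.norm_exp]
  have : (Complex.I * (km : ℂ) * (r : ℂ)).re = 0 := by simp
  rw [this, Real.exp_zero]

lemma norm_exp_neg_I_mul (km r : ℝ) : ‖Complex.exp (-(Complex.I * (km : ℂ) * (r : ℂ)))‖ = 1 := by
  rw [Complex.norm_exp]
  have : (-(Complex.I * (km : ℂ) * (r : ℂ))).re = 0 := by simp
  rw [this, Real.exp_zero]

lemma euclid_norm_le (w : EuclideanSpace ℂ (Fin 2)) (M : ℝ) (h0 : ‖w 0‖ ≤ M) (h1 : ‖w 1‖ ≤ M) :
    ‖w‖ ≤ 2 * M := by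
  have hM : 0 ≤ M := le_trans (norm_nonneg _) h0
  rw [EuclideanSpace.norm_eq, Fin.sum_univ_two]
  have : ‖w 0‖ ^ 2 + ‖w 1‖ ^ 2 ≤ (2 * M) ^ 2 := by nlinarith [norm_nonneg (w 0), norm_nonneg (w 1)]
  calc Real.sqrt (‖w 0‖ ^ 2 + ‖w 1‖ ^ 2) ≤ Real.sqrt ((2 * M) ^ 2) := Real.sqrt_le_sqrt this
    _ = 2 * M := Real.sqrt_sq (by linarith)

end Aux5
namespace Aux5

lemma norm_mul_le_of_le {a b : ℂ} {A B : ℝ} (ha : ‖a‖ ≤ A) (hb : ‖b‖ ≤ B) :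
    ‖a * b‖ ≤ A * B := by
  rw [norm_mul]
  exact mul_le_mul ha hb (norm_nonneg _) (le_trans (norm_nonneg _) ha)

end Aux5

/-- The plane-wave factor `e^{i k₋ v(θ)·z}`. -/
def Efun (kp km θ : ℝ) (z : R2) : ℂ :=
  Complex.exp (Complex.I * (km : ℂ) * ((dotp (vdir kp km θ) z : ℝ) : ℂ))

/-- The kernel factor `(−i k₋ ν(y)·v(θ)) e^{−i k₋ v(θ)·y}`. -/
def Kfun (kp km : ℝ) (ν : R2 → R2) (θ : ℝ) (y : R2) : ℂ :=
  (-(Complex.I * (km : ℂ) * ((dotp (vdir kp km θ) (ν y) : ℝ) : ℂ))) *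
    Complex.exp (-(Complex.I * (km : ℂ) * ((dotp (vdir kp km θ) y : ℝ) : ℂ)))

/-- global focusing, sound-hard case: if `T` is the integral operator on `L²(Ŝ)`
with the factorized kernel `t(β,α) = Q(β) ∫_Γ (−i k₋ ν(y)·v(β)) e^{−i k₋ v(β)·y} H(α,y) dσ(y)`
and `T f = λ f` with `λ ≠ 0`, then with `h₂(y) = λ⁻¹ ∫_Ŝ H(α, y) f(α) ds_α` the transmitted
Herglotz field satisfies `u_f^{trans}(x) = −i k₋ ∫_Γ ν(y)·B₁(x − y) h₂(y) dσ(y)` for all `x`. -/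
theorem stmt5_global_focusing_hard (kp km : ℝ) (hkp : 0 < kp) (hkm : 0 < km) (hne : kp ≠ km)
    (Γ : Set R2) (hΓcompact : IsCompact Γ) (hΓlower : ∀ y ∈ Γ, y 1 < 0)
    (σ : Measure R2) [IsFiniteMeasure σ]
    (ν : R2 → R2) (hνmeas : Measurable ν) (hνunit : ∀ y ∈ Γ, ‖ν y‖ = 1)
    (H : ℝ → R2 → ℂ) (hHmeas : Measurable (Function.uncurry H))
    (hHbdd : ∃ C : ℝ, ∀ α y, ‖H α y‖ ≤ C)
    (f : ℝ → ℂ) (hf : MemLp f 2 (volume.restrict (Sarc kp km)))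
    (lam : ℂ) (hlam : lam ≠ 0)
    (heig : ∀ᵐ β ∂(volume.restrict (Sarc kp km)),
      lam * f β = ∫ α in Sarc kp km,
        ((Qco kp km β : ℂ) * ∫ y in Γ,
          (-(Complex.I * (km : ℂ) * ((dotp (vdir kp km β) (ν y) : ℝ) : ℂ))) *
            Complex.exp (-(Complex.I * (km : ℂ) * ((dotp (vdir kp km β) y : ℝ) : ℂ))) * H α y ∂σ)
          * f α) :
    ∀ x : R2,
      (∫ β in Sarc kp km, f β * (Qco kp km β : ℂ) *
          Complex.exp (Complex.I * (km : ℂ) * ((dotp (vdir kp km β) x : ℝ) : ℂ)))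
        = (-(Complex.I * (km : ℂ))) * ∫ y in Γ,
            (((ν y 0 : ℝ) : ℂ) * B1 kp km (x - y) 0 + ((ν y 1 : ℝ) : ℂ) * B1 kp km (x - y) 1) *
              (lam⁻¹ * ∫ α in Sarc kp km, H α y * f α) ∂σ := by
  classical
  intro x
  obtain ⟨C, hC⟩ := hHbdd
  have hC0 : 0 ≤ C := le_trans (norm_nonneg _) (hC 0 0)
  have hSmeas : MeasurableSet (Sarc kp km) := measurableSet_Ioo
  have hΓmeas : MeasurableSet Γ := hΓcompact.isClosed.measurableSet
  haveI hfinS : IsFiniteMeasure (volume.restrict (Sarc kp km)) := by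
    constructor
    rw [Measure.restrict_apply_univ]
    unfold Sarc
    rw [Real.volume_Ioo]
    exact ENNReal.ofReal_lt_top
  have hfint : Integrable f (volume.restrict (Sarc kp km)) := hf.integrable one_le_two
  set CK : ℝ := km * (|kp / km| + 1) with hCK
  set Cg : ℝ := C * ∫ α in Sarc kp km, ‖f α‖ with hCg
  have hCg0 : 0 ≤ Cg := mul_nonneg hC0 (integral_nonneg fun α => norm_nonneg _)
  -- measurability of the building blocks
  have hvm : ∀ i, Measurable fun θ => vdir kp km θ i := Aux5.measurable_vdir kp km
  have hQm : Measurable fun θ => ((Qco kp km θ : ℝ) : ℂ) :=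
    Complex.measurable_ofReal.comp (Aux5.measurable_Qco kp km)
  have hcoordm : ∀ i : Fin 2, Measurable fun w : R2 => w i := fun i => (PiLp.continuous_apply 2 (fun _ : Fin 2 => ℝ) i).measurable
  have hdm : ∀ z : R2, Measurable fun θ => dotp (vdir kp km θ) z := by
    intro z
    unfold dotp
    exact ((hvm 0).mul measurable_const).add ((hvm 1).mul measurable_const)
  have hEm : ∀ z : R2, Measurable fun θ => Efun kp km θ z := by
    intro z
    unfold Efun
    exact Complex.measurable_exp.comp
      (measurable_const.mul (Complex.measurable_ofReal.comp (hdm z)))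
  have hKm : Measurable fun p : ℝ × R2 => Kfun kp km ν p.1 p.2 := by
    unfold Kfun
    have hd1 : Measurable fun p : ℝ × R2 => dotp (vdir kp km p.1) (ν p.2) := by
      unfold dotp
      exact (((hvm 0).comp measurable_fst).mul
          ((hcoordm 0).comp (hνmeas.comp measurable_snd))).add
        (((hvm 1).comp measurable_fst).mul ((hcoordm 1).comp (hνmeas.comp measurable_snd)))
    have hd2 : Measurable fun p : ℝ × R2 => dotp (vdir kp km p.1) p.2 := by
      unfold dotp
      exact (((hvm 0).comp measurable_fst).mul ((hcoordm 0).comp measurable_snd)).add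
        (((hvm 1).comp measurable_fst).mul ((hcoordm 1).comp measurable_snd))
    exact ((measurable_const.mul (Complex.measurable_ofReal.comp hd1)).neg).mul
      (Complex.measurable_exp.comp
        ((measurable_const.mul (Complex.measurable_ofReal.comp hd2)).neg))
  -- norm facts
  have hnormE : ∀ (θ : ℝ) (z : R2), ‖Efun kp km θ z‖ = 1 := fun θ z => Aux5.norm_exp_I_mul km _
  have hKbound : ∀ θ : ℝ, ∀ y ∈ Γ, ‖Kfun kp km ν θ y‖ ≤ CK := by
    intro θ y hy
    unfold Kfun
    rw [norm_mul, Aux5.norm_exp_neg_I_mul, mul_one, norm_neg, norm_mul, norm_mul,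
      Complex.norm_I, one_mul, Complex.norm_real, Complex.norm_real, Real.norm_eq_abs,
      Real.norm_eq_abs, abs_of_pos hkm]
    have h := Aux5.abs_dotp_le kp km θ (ν y)
    rw [hνunit y hy, mul_one] at h
    rw [hCK]
    exact mul_le_mul_of_nonneg_left h (le_of_lt hkm)
  have hQbound : ∀ θ ∈ Sarc kp km, ‖((Qco kp km θ : ℝ) : ℂ) ^ 2‖ ≤ 4 := by
    intro θ hθ
    rw [norm_pow, Complex.norm_real, Real.norm_eq_abs]
    have h := Aux5.abs_Qco_le kp km hkp hkm hθ
    nlinarith [abs_nonneg (Qco kp km θ)]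
  -- facts about g y = ∫ α, H α y * f α
  have hgm : AEStronglyMeasurable (fun y => ∫ α in Sarc kp km, H α y * f α) (σ.restrict Γ) := by
    have hp : AEStronglyMeasurable (fun p : R2 × ℝ => H p.2 p.1 * f p.2)
        ((σ.restrict Γ).prod (volume.restrict (Sarc kp km))) := by
      apply AEStronglyMeasurable.mul
      · exact (hHmeas.comp (measurable_snd.prodMk measurable_fst)).aestronglyMeasurable
      · exact hf.1.comp_snd
    exact hp.integral_prod_right'
  have hgbdd : ∀ y : R2, ‖∫ α in Sarc kp km, H α y * f α‖ ≤ Cg := by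
    intro y
    calc ‖∫ α in Sarc kp km, H α y * f α‖
        ≤ ∫ α in Sarc kp km, C * ‖f α‖ :=
          norm_integral_le_of_norm_le (hfint.norm.const_mul C)
            (ae_of_all _ fun α => by
              rw [norm_mul]
              exact mul_le_mul_of_nonneg_right (hC α y) (norm_nonneg _))
      _ = Cg := integral_const_mul C _
  have hprodmem : ∀ᵐ p : ℝ × R2 ∂((volume.restrict (Sarc kp km)).prod (σ.restrict Γ)),
      p.1 ∈ Sarc kp km ∧ p.2 ∈ Γ := by
    rw [Measure.prod_restrict]
    filter_upwards [ae_restrict_mem (hSmeas.prod hΓmeas)] with p hp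
    exact ⟨hp.1, hp.2⟩
  -- Step 1 : substitute the eigenvalue relation
  have step1 : ∀ᵐ β ∂(volume.restrict (Sarc kp km)),
      f β * ((Qco kp km β : ℝ) : ℂ) * Efun kp km β x
        = (lam⁻¹ * ∫ α in Sarc kp km,
            (((Qco kp km β : ℝ) : ℂ) * ∫ y in Γ, Kfun kp km ν β y * H α y ∂σ) * f α)
            * ((Qco kp km β : ℝ) : ℂ) * Efun kp km β x := by
    filter_upwards [heig] with β hβ
    have hβ' : lam * f β = ∫ α in Sarc kp km,
        (((Qco kp km β : ℝ) : ℂ) * ∫ y in Γ, Kfun kp km ν β y * H α y ∂σ) * f α := hβ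
    have hfβ : f β = lam⁻¹ * ∫ α in Sarc kp km,
        (((Qco kp km β : ℝ) : ℂ) * ∫ y in Γ, Kfun kp km ν β y * H α y ∂σ) * f α := by
      rw [← hβ']
      exact (inv_mul_cancel_left₀ hlam (f β)).symm
    rw [hfβ]
  -- Step 2 : Fubini in (α, y) for fixed β
  have step2 : ∀ β : ℝ,
      (∫ α in Sarc kp km,
          (((Qco kp km β : ℝ) : ℂ) * ∫ y in Γ, Kfun kp km ν β y * H α y ∂σ) * f α)
        = ((Qco kp km β : ℝ) : ℂ) *
            ∫ y in Γ, Kfun kp km ν β y * (∫ α in Sarc kp km, H α y * f α) ∂σ := by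
    intro β
    have hswap : Integrable (Function.uncurry fun α y => Kfun kp km ν β y * H α y * f α)
        ((volume.restrict (Sarc kp km)).prod (σ.restrict Γ)) := by
      have hunc : (Function.uncurry fun α y => Kfun kp km ν β y * H α y * f α)
          = fun p : ℝ × R2 => Kfun kp km ν β p.2 * H p.1 p.2 * f p.1 := rfl
      rw [hunc]
      apply Integrable.mono' (Integrable.mul_prod hfint.norm (integrable_const (CK * C)))
      · apply AEStronglyMeasurable.mul
        · apply Measurable.aestronglyMeasurable
          apply Measurable.mul
          · exact (hKm.comp (measurable_const.prodMk measurable_id)).comp measurable_snd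
          · exact hHmeas
        · exact hf.1.comp_fst
      · filter_upwards [hprodmem] with p hp
        exact le_of_le_of_eq
          (Aux5.norm_mul_le_of_le
            (Aux5.norm_mul_le_of_le (hKbound β p.2 hp.2) (hC p.1 p.2)) (le_refl ‖f p.1‖))
          (mul_comm _ _)
    calc (∫ α in Sarc kp km,
            (((Qco kp km β : ℝ) : ℂ) * ∫ y in Γ, Kfun kp km ν β y * H α y ∂σ) * f α)
        = ∫ α in Sarc kp km, ((Qco kp km β : ℝ) : ℂ) *
            ((∫ y in Γ, Kfun kp km ν β y * H α y ∂σ) * f α) := by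
          simp only [mul_assoc]
      _ = ((Qco kp km β : ℝ) : ℂ) *
            ∫ α in Sarc kp km, (∫ y in Γ, Kfun kp km ν β y * H α y ∂σ) * f α :=
          integral_const_mul _ _
      _ = ((Qco kp km β : ℝ) : ℂ) *
            ∫ α in Sarc kp km, ∫ y in Γ, Kfun kp km ν β y * H α y * f α ∂σ := by
          congr 1
          exact integral_congr_ae (ae_of_all _ fun α => (integral_mul_const _ _).symm)
      _ = ((Qco kp km β : ℝ) : ℂ) *
            ∫ y in Γ, (∫ α in Sarc kp km, Kfun kp km ν β y * H α y * f α) ∂σ := by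
          congr 1
          exact integral_integral_swap hswap
      _ = ((Qco kp km β : ℝ) : ℂ) *
            ∫ y in Γ, Kfun kp km ν β y * (∫ α in Sarc kp km, H α y * f α) ∂σ := by
          congr 1
          apply integral_congr_ae (ae_of_all _ fun y => ?_)
          calc (∫ α in Sarc kp km, Kfun kp km ν β y * H α y * f α)
              = ∫ α in Sarc kp km, Kfun kp km ν β y * (H α y * f α) := by
                simp only [mul_assoc]
            _ = Kfun kp km ν β y * ∫ α in Sarc kp km, H α y * f α := integral_const_mul _ _
  -- component bound for the B1 integrand
  have hcomp : ∀ (z : R2) (i : Fin 2), ∀ θ ∈ Sarc kp km,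
      ‖((vdir kp km θ i : ℝ) : ℂ) * ((Qco kp km θ : ℝ) : ℂ) ^ 2 * Efun kp km θ z‖
        ≤ (|kp / km| + 1) * 4 := by
    intro z i θ hθ
    have h1 : ‖((vdir kp km θ i : ℝ) : ℂ)‖ ≤ |kp / km| + 1 := by
      rw [Complex.norm_real, Real.norm_eq_abs]
      fin_cases i
      · exact (Aux5.abs_vdir0_le kp km θ).trans (by linarith)
      · exact (Aux5.abs_vdir1_le kp km θ).trans (by nlinarith [abs_nonneg (kp / km)])
    exact le_of_le_of_eq
      (Aux5.norm_mul_le_of_le (Aux5.norm_mul_le_of_le h1 (hQbound θ hθ))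
        (le_of_eq (hnormE θ z)))
      (mul_one _)
  have hcomp_int : ∀ (z : R2) (i : Fin 2), Integrable
      (fun θ => ((vdir kp km θ i : ℝ) : ℂ) * ((Qco kp km θ : ℝ) : ℂ) ^ 2 * Efun kp km θ z)
      (volume.restrict (Sarc kp km)) := by
    intro z i
    apply Integrable.mono' (integrable_const ((|kp / km| + 1) * 4))
    · exact (((Complex.measurable_ofReal.comp (hvm i)).mul (hQm.pow_const 2)).mul
        (hEm z)).aestronglyMeasurable
    · filter_upwards [ae_restrict_mem hSmeas] with θ hθ
      exact hcomp z i θ hθ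
  have hFint : ∀ z : R2, Integrable (fun θ => (WithLp.equiv 2 (Fin 2 → ℂ)).symm
      (fun i => ((vdir kp km θ i : ℝ) : ℂ) * ((Qco kp km θ : ℝ) : ℂ) ^ 2 * Efun kp km θ z))
      (volume.restrict (Sarc kp km)) := by
    intro z
    apply Integrable.mono' (integrable_const (2 * ((|kp / km| + 1) * 4)))
    · exact Continuous.comp_aestronglyMeasurable
        (PiLp.continuous_toLp 2 fun _ : Fin 2 => ℂ)
        (Measurable.aestronglyMeasurable (measurable_pi_lambda _ fun i =>
          ((Complex.measurable_ofReal.comp (hvm i)).mul (hQm.pow_const 2)).mul (hEm z)))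
    · filter_upwards [ae_restrict_mem hSmeas] with θ hθ
      apply Aux5.euclid_norm_le
      · exact hcomp z 0 θ hθ
      · exact hcomp z 1 θ hθ
  have hB1 : ∀ (z : R2) (i : Fin 2), B1 kp km z i
      = ∫ θ in Sarc kp km,
          ((vdir kp km θ i : ℝ) : ℂ) * ((Qco kp km θ : ℝ) : ℂ) ^ 2 * Efun kp km θ z := by
    intro z i
    calc B1 kp km z i
        = (EuclideanSpace.proj (𝕜 := ℂ) i) (B1 kp km z) := rfl
      _ = ∫ θ in Sarc kp km, (EuclideanSpace.proj (𝕜 := ℂ) i)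
            ((WithLp.equiv 2 (Fin 2 → ℂ)).symm
              (fun j => ((vdir kp km θ j : ℝ) : ℂ) * ((Qco kp km θ : ℝ) : ℂ) ^ 2 *
                Efun kp km θ z)) :=
          (ContinuousLinearMap.integral_comp_comm _ (hFint z)).symm
      _ = ∫ θ in Sarc kp km,
            ((vdir kp km θ i : ℝ) : ℂ) * ((Qco kp km θ : ℝ) : ℂ) ^ 2 * Efun kp km θ z := by
          apply integral_congr_ae (ae_of_all _ fun θ => ?_)
          rfl
  -- Step 4 : per-y identification with B1
  have step4 : ∀ y : R2,
      (∫ β in Sarc kp km, ((Qco kp km β : ℝ) : ℂ) ^ 2 * Efun kp km β x * Kfun kp km ν β y)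
        = (-(Complex.I * (km : ℂ))) *
            (((ν y 0 : ℝ) : ℂ) * B1 kp km (x - y) 0 +
              ((ν y 1 : ℝ) : ℂ) * B1 kp km (x - y) 1) := by
    intro y
    have hpt : ∀ β : ℝ,
        ((Qco kp km β : ℝ) : ℂ) ^ 2 * Efun kp km β x * Kfun kp km ν β y
          = (-(Complex.I * (km : ℂ))) *
              (((ν y 0 : ℝ) : ℂ) * (((vdir kp km β 0 : ℝ) : ℂ) *
                  ((Qco kp km β : ℝ) : ℂ) ^ 2 * Efun kp km β (x - y))
               + ((ν y 1 : ℝ) : ℂ) * (((vdir kp km β 1 : ℝ) : ℂ) *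
                  ((Qco kp km β : ℝ) : ℂ) ^ 2 * Efun kp km β (x - y))) := by
      intro β
      have hsub : dotp (vdir kp km β) (x - y)
          = dotp (vdir kp km β) x - dotp (vdir kp km β) y := by
        unfold dotp
        have h0 : (x - y) 0 = x 0 - y 0 := rfl
        have h1 : (x - y) 1 = x 1 - y 1 := rfl
        rw [h0, h1]; ring
      have hPR : Efun kp km β (x - y)
          = Efun kp km β x *
              Complex.exp (-(Complex.I * (km : ℂ) * ((dotp (vdir kp km β) y : ℝ) : ℂ))) := by
        unfold Efun
        rw [hsub, Complex.ofReal_sub,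
          show Complex.I * (km : ℂ) * (((dotp (vdir kp km β) x : ℝ) : ℂ) -
              ((dotp (vdir kp km β) y : ℝ) : ℂ))
            = Complex.I * (km : ℂ) * ((dotp (vdir kp km β) x : ℝ) : ℂ) +
              -(Complex.I * (km : ℂ) * ((dotp (vdir kp km β) y : ℝ) : ℂ)) from by ring,
          Complex.exp_add]
      have hd : ((dotp (vdir kp km β) (ν y) : ℝ) : ℂ)
          = ((vdir kp km β 0 : ℝ) : ℂ) * ((ν y 0 : ℝ) : ℂ) +
            ((vdir kp km β 1 : ℝ) : ℂ) * ((ν y 1 : ℝ) : ℂ) := by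
        unfold dotp
        push_cast
        ring
      unfold Kfun
      rw [hPR, hd]
      ring
    rw [integral_congr_ae (ae_of_all _ hpt), integral_const_mul]
    congr 1
    rw [integral_add ((hcomp_int (x - y) 0).const_mul _) ((hcomp_int (x - y) 1).const_mul _),
      integral_const_mul, integral_const_mul, hB1 (x - y) 0, hB1 (x - y) 1]
  -- Step 3 : Fubini in (β, y)
  have hInt2 : Integrable (Function.uncurry fun β y =>
      ((Qco kp km β : ℝ) : ℂ) ^ 2 * Efun kp km β x *
        (Kfun kp km ν β y * ∫ α in Sarc kp km, H α y * f α))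
      ((volume.restrict (Sarc kp km)).prod (σ.restrict Γ)) := by
    have hunc : (Function.uncurry fun β y =>
        ((Qco kp km β : ℝ) : ℂ) ^ 2 * Efun kp km β x *
          (Kfun kp km ν β y * ∫ α in Sarc kp km, H α y * f α))
        = fun p : ℝ × R2 => ((Qco kp km p.1 : ℝ) : ℂ) ^ 2 * Efun kp km p.1 x *
            (Kfun kp km ν p.1 p.2 * ∫ α in Sarc kp km, H α p.2 * f α) := rfl
    rw [hunc]
    apply Integrable.mono' (integrable_const (4 * 1 * (CK * Cg)))
    · apply AEStronglyMeasurable.mul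
      · exact (((hQm.pow_const 2).comp measurable_fst).mul
          ((hEm x).comp measurable_fst)).aestronglyMeasurable
      · exact hKm.aestronglyMeasurable.mul hgm.comp_snd
    · filter_upwards [hprodmem] with p hp
      exact Aux5.norm_mul_le_of_le
        (Aux5.norm_mul_le_of_le (hQbound p.1 hp.1) (le_of_eq (hnormE p.1 x)))
        (Aux5.norm_mul_le_of_le (hKbound p.1 p.2 hp.2) (hgbdd p.2))
  -- assemble everything
  show (∫ β in Sarc kp km, f β * ((Qco kp km β : ℝ) : ℂ) * Efun kp km β x)
      = (-(Complex.I * (km : ℂ))) * ∫ y in Γ,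
          (((ν y 0 : ℝ) : ℂ) * B1 kp km (x - y) 0 + ((ν y 1 : ℝ) : ℂ) * B1 kp km (x - y) 1) *
            (lam⁻¹ * ∫ α in Sarc kp km, H α y * f α) ∂σ
  calc (∫ β in Sarc kp km, f β * ((Qco kp km β : ℝ) : ℂ) * Efun kp km β x)
      = ∫ β in Sarc kp km,
          (lam⁻¹ * ∫ α in Sarc kp km,
            (((Qco kp km β : ℝ) : ℂ) * ∫ y in Γ, Kfun kp km ν β y * H α y ∂σ) * f α)
            * ((Qco kp km β : ℝ) : ℂ) * Efun kp km β x := integral_congr_ae step1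
    _ = ∫ β in Sarc kp km, lam⁻¹ * (((Qco kp km β : ℝ) : ℂ) ^ 2 * Efun kp km β x *
          ∫ y in Γ, Kfun kp km ν β y * (∫ α in Sarc kp km, H α y * f α) ∂σ) := by
        apply integral_congr_ae (ae_of_all _ fun β => ?_)
        rw [step2 β]; ring
    _ = lam⁻¹ * ∫ β in Sarc kp km, ((Qco kp km β : ℝ) : ℂ) ^ 2 * Efun kp km β x *
          ∫ y in Γ, Kfun kp km ν β y * (∫ α in Sarc kp km, H α y * f α) ∂σ :=
        integral_const_mul _ _
    _ = lam⁻¹ * ∫ β in Sarc kp km, ∫ y in Γ, ((Qco kp km β : ℝ) : ℂ) ^ 2 * Efun kp km β x *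
          (Kfun kp km ν β y * ∫ α in Sarc kp km, H α y * f α) ∂σ := by
        congr 1
        exact integral_congr_ae (ae_of_all _ fun β => (integral_const_mul _ _).symm)
    _ = lam⁻¹ * ∫ y in Γ, (∫ β in Sarc kp km, ((Qco kp km β : ℝ) : ℂ) ^ 2 * Efun kp km β x *
          (Kfun kp km ν β y * ∫ α in Sarc kp km, H α y * f α)) ∂σ := by
        congr 1
        exact integral_integral_swap hInt2
    _ = lam⁻¹ * ∫ y in Γ,
          (∫ β in Sarc kp km, ((Qco kp km β : ℝ) : ℂ) ^ 2 * Efun kp km β x * Kfun kp km ν β y)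
            * (∫ α in Sarc kp km, H α y * f α) ∂σ := by
        congr 1
        apply integral_congr_ae (ae_of_all _ fun y => ?_)
        rw [← integral_mul_const]
        apply integral_congr_ae (ae_of_all _ fun β => ?_)
        ring
    _ = lam⁻¹ * ∫ y in Γ,
          ((-(Complex.I * (km : ℂ))) *
            (((ν y 0 : ℝ) : ℂ) * B1 kp km (x - y) 0 + ((ν y 1 : ℝ) : ℂ) * B1 kp km (x - y) 1))
            * (∫ α in Sarc kp km, H α y * f α) ∂σ := by
        congr 1
        apply integral_congr_ae (ae_of_all _ fun y => ?_)
        rw [step4 y]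
    _ = (-(Complex.I * (km : ℂ))) * ∫ y in Γ,
          (((ν y 0 : ℝ) : ℂ) * B1 kp km (x - y) 0 + ((ν y 1 : ℝ) : ℂ) * B1 kp km (x - y) 1) *
            (lam⁻¹ * ∫ α in Sarc kp km, H α y * f α) ∂σ := by
        have e1 : (∫ y in Γ,
              ((-(Complex.I * (km : ℂ))) *
                (((ν y 0 : ℝ) : ℂ) * B1 kp km (x - y) 0 +
                  ((ν y 1 : ℝ) : ℂ) * B1 kp km (x - y) 1))
                * (∫ α in Sarc kp km, H α y * f α) ∂σ)
            = (-(Complex.I * (km : ℂ))) * ∫ y in Γ,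
                (((ν y 0 : ℝ) : ℂ) * B1 kp km (x - y) 0 +
                  ((ν y 1 : ℝ) : ℂ) * B1 kp km (x - y) 1) *
                  (∫ α in Sarc kp km, H α y * f α) ∂σ := by
          rw [← integral_const_mul]
          apply integral_congr_ae (ae_of_all _ fun y => ?_)
          ring
        have e2 : (∫ y in Γ,
              (((ν y 0 : ℝ) : ℂ) * B1 kp km (x - y) 0 +
                ((ν y 1 : ℝ) : ℂ) * B1 kp km (x - y) 1) *
                (lam⁻¹ * ∫ α in Sarc kp km, H α y * f α) ∂σ)
            = lam⁻¹ * ∫ y in Γ,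
                (((ν y 0 : ℝ) : ℂ) * B1 kp km (x - y) 0 +
                  ((ν y 1 : ℝ) : ℂ) * B1 kp km (x - y) 1) *
                  (∫ α in Sarc kp km, H α y * f α) ∂σ := by
          rw [← integral_const_mul]
          apply integral_congr_ae (ae_of_all _ fun y => ?_)
          ring
        rw [e1, e2]
        ring
end
end

section
/- For any integer M ≥ 1 and any distinct points s₁, …, s_M in the lower half-plane ℝ²₋, the 3M functions g₁, …, g_M, h_{1,1}, h_{1,2}, …, h_{M,1}, h_{M,2}, viewed as continuous functions of the angle on the arc Ŝ (equivalently as elements of L²(Ŝ)), are linearly independent over ℂ. -/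
noncomputable section
open MeasureTheory Real Set

/-- `e_l(α) = e^{−i k₋ v(α)·s_l}` and `g_l(α) = Q(α) e_l(α)` (monopole far field at `s_l`). -/
def gfun (kp km : ℝ) (s : R2) (θ : ℝ) : ℂ :=
  (Qco kp km θ : ℂ) *
    Complex.exp (-(Complex.I * (km : ℂ) * ((dotp (vdir kp km θ) s : ℝ) : ℂ)))

/-- `h_{l,j}(α) = (𝐞_j · v(α)) Q(α) e_l(α)` (dipole far field at `s_l` in direction `𝐞_j`). -/
def hfun (kp km : ℝ) (s : R2) (j : Fin 2) (θ : ℝ) : ℂ :=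
  ((vdir kp km θ j : ℝ) : ℂ) * gfun kp km s θ

open Filter Topology

lemma pow_exp_tendsto (c : ℝ) (hc : 0 < c) (n : ℕ) (K : ℝ) :
    Tendsto (fun r : ℝ => K * (r ^ n * Real.exp (-(c * r)))) atTop (𝓝 0) := by
  have h1 : Tendsto (fun r : ℝ => c * r) atTop atTop :=
    Tendsto.const_mul_atTop hc tendsto_id
  have h2 := (Real.tendsto_pow_mul_exp_neg_atTop_nhds_zero n).comp h1
  have h3 := h2.const_mul (K * (c ^ n)⁻¹)
  rw [mul_zero] at h3
  refine h3.congr fun r => ?_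
  simp only [Function.comp]
  field_simp [mul_pow]
  ring

lemma winv_tendsto (u : ℂ) (hu : u ≠ 0) :
    Tendsto (fun r : ℝ => ((r : ℂ) * u)⁻¹) atTop (𝓝 0) := by
  have h1 : Tendsto (fun r : ℝ => ((r : ℝ)⁻¹ : ℂ)) atTop (𝓝 0) := by
    have := tendsto_inv_atTop_zero (𝕜 := ℝ)
    have h := (Complex.continuous_ofReal.tendsto 0).comp this
    simp only [Complex.ofReal_zero] at h
    refine h.congr fun r => ?_
    simp [Function.comp, Complex.ofReal_inv]
  have h2 := h1.mul_const u⁻¹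
  rw [zero_mul] at h2
  refine h2.congr fun r => ?_
  rw [mul_inv]

lemma expqw_tendsto (q u : ℂ) (hu : u ≠ 0) :
    Tendsto (fun r : ℝ => Complex.exp (q * ((r : ℂ) * u)⁻¹)) atTop (𝓝 1) := by
  have h1 := (winv_tendsto u hu).const_mul q
  rw [mul_zero] at h1
  have := (Complex.continuous_exp.tendsto 0).comp h1
  simpa [Function.comp_def] using this

lemma term_tendsto_zero (A C D z q u : ℂ) (hu : u ≠ 0) (h : (z * u).re < 0) (k : ℤ)
    (hk : k = -1 ∨ k = 0 ∨ k = 1) :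
    Tendsto (fun r : ℝ => (A + C * ((r:ℂ)*u) + D * ((r:ℂ)*u)⁻¹) *
      Complex.exp (z * ((r:ℂ)*u) + q * ((r:ℂ)*u)⁻¹) * ((r:ℂ)*u) ^ k) atTop (𝓝 0) := by
  have hun : 0 < ‖u‖ := norm_pos_iff.mpr hu
  set c : ℝ := -(z*u).re with hc
  have hcpos : 0 < c := by simp only [hc]; linarith
  set P1 : ℝ := ‖A‖ + ‖C‖*‖u‖ + ‖D‖*‖u‖⁻¹ with hP1
  set P3 : ℝ := ‖u‖ + ‖u‖⁻¹ + 1 with hP3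
  set E : ℝ := Real.exp (‖q‖ * ‖u‖⁻¹) with hE
  refine squeeze_zero_norm' ?_ (pow_exp_tendsto c hcpos 2 (P1 * P3 * E))
  filter_upwards [eventually_ge_atTop 1] with r hr
  have hr0 : (0:ℝ) < r := lt_of_lt_of_le one_pos hr
  have hwn : ‖(r:ℂ)*u‖ = r * ‖u‖ := by
    rw [norm_mul, Complex.norm_real, Real.norm_eq_abs, abs_of_pos hr0]
  have hwin : ‖((r:ℂ)*u)⁻¹‖ = (r * ‖u‖)⁻¹ := by rw [norm_inv, hwn]
  have hb1 : ‖A + C * ((r:ℂ)*u) + D * ((r:ℂ)*u)⁻¹‖ ≤ P1 * r := by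
    calc ‖A + C * ((r:ℂ)*u) + D * ((r:ℂ)*u)⁻¹‖
        ≤ ‖A‖ + ‖C * ((r:ℂ)*u)‖ + ‖D * ((r:ℂ)*u)⁻¹‖ := norm_add₃_le
      _ = ‖A‖ + ‖C‖ * (r * ‖u‖) + ‖D‖ * (r*‖u‖)⁻¹ := by
          simp only [norm_mul, norm_inv, Complex.norm_real, Real.norm_eq_abs, abs_of_pos hr0]
          try ring
      _ ≤ P1 * r := by
          rw [hP1]
          have h1 : ‖D‖ * (r*‖u‖)⁻¹ ≤ ‖D‖ * ‖u‖⁻¹ := by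
            apply mul_le_mul_of_nonneg_left _ (norm_nonneg _)
            rw [mul_inv]
            nlinarith [inv_nonneg.mpr (norm_nonneg u), inv_le_one_of_one_le₀ hr]
          nlinarith [norm_nonneg A, norm_nonneg C, norm_nonneg D,
            mul_nonneg (norm_nonneg D) (inv_nonneg.mpr (norm_nonneg u))]
  have hb2 : ‖Complex.exp (z * ((r:ℂ)*u) + q * ((r:ℂ)*u)⁻¹)‖ ≤ Real.exp (-(c*r)) * E := by
    rw [Complex.norm_exp, hE, ← Real.exp_add]
    apply Real.exp_le_exp.mpr
    have h1 : (z * ((r:ℂ)*u)).re = r * (z*u).re := by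
      rw [show z * ((r:ℂ)*u) = (r:ℂ) * (z*u) by ring, Complex.re_ofReal_mul]
    have h2 : (q * ((r:ℂ)*u)⁻¹).re ≤ ‖q‖ * ‖u‖⁻¹ := by
      calc (q * ((r:ℂ)*u)⁻¹).re ≤ ‖q * ((r:ℂ)*u)⁻¹‖ := Complex.re_le_norm _
        _ = ‖q‖ * (r*‖u‖)⁻¹ := by rw [norm_mul, hwin]
        _ ≤ ‖q‖ * ‖u‖⁻¹ := by
            apply mul_le_mul_of_nonneg_left _ (norm_nonneg _)
            rw [mul_inv]
            nlinarith [inv_nonneg.mpr (norm_nonneg u), inv_le_one_of_one_le₀ hr]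
    rw [Complex.add_re, h1]
    have : r * (z*u).re = -(c*r) := by rw [hc]; ring
    linarith
  have hb3 : ‖((r:ℂ)*u) ^ k‖ ≤ P3 * r := by
    rw [norm_zpow, hwn, hP3]
    have hru : (0:ℝ) < r * ‖u‖ := by positivity
    rcases hk with hk | hk | hk <;> subst hk
    · rw [zpow_neg_one]
      have : (r * ‖u‖)⁻¹ ≤ ‖u‖⁻¹ := by
        rw [mul_inv]; nlinarith [inv_nonneg.mpr (norm_nonneg u), inv_le_one_of_one_le₀ hr]
      nlinarith [inv_nonneg.mpr (norm_nonneg u)]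
    · rw [zpow_zero]; nlinarith [inv_nonneg.mpr (norm_nonneg u)]
    · rw [zpow_one]; nlinarith [inv_nonneg.mpr (norm_nonneg u)]
  calc ‖(A + C * ((r:ℂ)*u) + D * ((r:ℂ)*u)⁻¹) *
      Complex.exp (z * ((r:ℂ)*u) + q * ((r:ℂ)*u)⁻¹) * ((r:ℂ)*u) ^ k‖
      = ‖A + C * ((r:ℂ)*u) + D * ((r:ℂ)*u)⁻¹‖ *
        ‖Complex.exp (z * ((r:ℂ)*u) + q * ((r:ℂ)*u)⁻¹)‖ * ‖((r:ℂ)*u) ^ k‖ := by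
        rw [norm_mul, norm_mul]
    _ ≤ (P1 * r) * (Real.exp (-(c*r)) * E) * (P3 * r) := by
        apply mul_le_mul (mul_le_mul hb1 hb2 (norm_nonneg _) (by positivity)) hb3
          (norm_nonneg _) (by positivity)
    _ = (P1 * P3 * E) * (r^2 * Real.exp (-(c*r))) := by ring

lemma zero_set_countable (qc : ℂ) (hq : qc ≠ 0) :
    Set.Countable {φ : ℝ | (qc * Complex.exp ((φ:ℂ) * Complex.I)).re = 0} := by
  apply Set.Countable.mono ?_
    (Set.countable_range fun n : ℤ => (2*(n:ℝ)+1) * Real.pi / 2 - qc.arg)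
  intro φ hφ
  simp only [Set.mem_setOf_eq] at hφ
  have habs : (‖qc‖ : ℝ) ≠ 0 := by simpa using hq
  have h1 : qc * Complex.exp ((φ:ℂ) * Complex.I)
      = ((‖qc‖ : ℝ) : ℂ) * Complex.exp (((qc.arg + φ : ℝ):ℂ) * Complex.I) := by
    conv_lhs => rw [← Complex.norm_mul_exp_arg_mul_I qc]
    rw [mul_assoc, ← Complex.exp_add, Complex.ofReal_add]
    ring_nf
  rw [h1, Complex.re_ofReal_mul, Complex.exp_ofReal_mul_I_re] at hφ
  have h2 : Real.cos (qc.arg + φ) = 0 := by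
    rcases mul_eq_zero.mp hφ with h | h
    · exact absurd h habs
    · exact h
  rw [Real.cos_eq_zero_iff] at h2
  obtain ⟨n, hn⟩ := h2
  exact ⟨n, by linarith⟩

lemma exists_good_dir {ι : Type*} [Countable ι] (p : ι → ℂ) :
    ∃ φ : ℝ, ∀ l m : ι, p l ≠ p m →
      ((p l - p m) * Complex.exp ((φ:ℂ) * Complex.I)).re ≠ 0 := by
  have hB : Set.Countable (⋃ (l : ι) (m : ι) (_ : p l ≠ p m),
      {φ : ℝ | ((p l - p m) * Complex.exp ((φ:ℂ) * Complex.I)).re = 0}) := by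
    apply Set.countable_iUnion; intro l
    apply Set.countable_iUnion; intro m
    apply Set.countable_iUnion; intro h
    exact zero_set_countable _ (sub_ne_zero.mpr h)
  have hne : (⋃ (l : ι) (m : ι) (_ : p l ≠ p m),
      {φ : ℝ | ((p l - p m) * Complex.exp ((φ:ℂ) * Complex.I)).re = 0}) ≠ Set.univ := by
    intro h; exact Set.not_countable_univ (h ▸ hB)
  obtain ⟨φ, hφ⟩ := Set.ne_univ_iff_exists_notMem _ |>.mp hne
  refine ⟨φ, fun l m hne h => hφ ?_⟩
  exact Set.mem_iUnion.mpr ⟨l, Set.mem_iUnion.mpr ⟨m, Set.mem_iUnion.mpr ⟨hne, h⟩⟩⟩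

lemma key_lemma {ι : Type*} [DecidableEq ι] [Countable ι] (p q A C D : ι → ℂ) :
    ∀ S : Finset ι, Set.InjOn p S →
    (∀ w : ℂ, w ≠ 0 →
      ∑ m ∈ S, (A m + C m * w + D m * w⁻¹) * Complex.exp (p m * w + q m * w⁻¹) = 0) →
    ∀ l ∈ S, A l = 0 ∧ C l = 0 ∧ D l = 0 := by
  intro S
  induction S using Finset.strongInduction with
  | _ S ih =>
    intro hp hsum l hl
    have hS : S.Nonempty := ⟨l, hl⟩
    obtain ⟨φ, hφ⟩ := exists_good_dir p
    set u : ℂ := Complex.exp ((φ:ℂ) * Complex.I) with hu'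
    have hu : u ≠ 0 := Complex.exp_ne_zero _
    obtain ⟨l0, hl0, hmax⟩ := S.exists_max_image (fun m => (p m * u).re) hS
    have hstrict : ∀ m ∈ S, m ≠ l0 → (p m * u).re < (p l0 * u).re := by
      intro m hm hne
      rcases lt_or_eq_of_le (hmax m hm) with h | h
      · exact h
      · exact absurd (by rw [sub_mul, Complex.sub_re, h, sub_self])
          (hφ m l0 (fun hpe => hne (hp hm hl0 hpe)))
    -- main extraction principle
    have main : ∀ (k : ℤ), (k = -1 ∨ k = 0 ∨ k = 1) → ∀ (L : ℂ),
        Tendsto (fun r : ℝ => (A l0 + C l0 * ((r:ℂ)*u) + D l0 * ((r:ℂ)*u)⁻¹) *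
          Complex.exp (q l0 * ((r:ℂ)*u)⁻¹) * ((r:ℂ)*u) ^ k) atTop (𝓝 L) → L = 0 := by
      intro k hk L hL
      set F : ι → ℝ → ℂ := fun m r =>
        (A m + C m * ((r:ℂ)*u) + D m * ((r:ℂ)*u)⁻¹) *
          Complex.exp (p m * ((r:ℂ)*u) + q m * ((r:ℂ)*u)⁻¹) *
          Complex.exp (-(p l0) * ((r:ℂ)*u)) * ((r:ℂ)*u) ^ k with hF
      have hterm : ∀ m ∈ S, Tendsto (F m) atTop (𝓝 (if m = l0 then L else 0)) := by
        intro m hm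
        by_cases hme : m = l0
        · subst hme
          simp only [if_pos rfl]
        
          refine hL.congr fun r => ?_
          have hre : Complex.exp (p m * ((r:ℂ)*u) + q m * ((r:ℂ)*u)⁻¹) *
              Complex.exp (-(p m) * ((r:ℂ)*u)) = Complex.exp (q m * ((r:ℂ)*u)⁻¹) := by
            rw [← Complex.exp_add]; congr 1; ring
          rw [hF]
          calc (A m + C m * ((r:ℂ)*u) + D m * ((r:ℂ)*u)⁻¹) *
              Complex.exp (q m * ((r:ℂ)*u)⁻¹) * ((r:ℂ)*u) ^ k
              = (A m + C m * ((r:ℂ)*u) + D m * ((r:ℂ)*u)⁻¹) *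
                (Complex.exp (p m * ((r:ℂ)*u) + q m * ((r:ℂ)*u)⁻¹) *
                 Complex.exp (-(p m) * ((r:ℂ)*u))) * ((r:ℂ)*u) ^ k := by rw [hre]
            _ = (A m + C m * ((r:ℂ)*u) + D m * ((r:ℂ)*u)⁻¹) *
                Complex.exp (p m * ((r:ℂ)*u) + q m * ((r:ℂ)*u)⁻¹) *
                Complex.exp (-(p m) * ((r:ℂ)*u)) * ((r:ℂ)*u) ^ k := by ring
        · simp only [if_neg hme]
          have hlt : ((p m - p l0) * u).re < 0 := by
            rw [sub_mul, Complex.sub_re, sub_neg]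
            exact hstrict m hm hme
          have h0 := term_tendsto_zero (A m) (C m) (D m) (p m - p l0) (q m) u hu hlt k hk
          refine h0.congr fun r => ?_
          have hre : Complex.exp ((p m - p l0) * ((r:ℂ)*u) + q m * ((r:ℂ)*u)⁻¹) =
              Complex.exp (p m * ((r:ℂ)*u) + q m * ((r:ℂ)*u)⁻¹) *
              Complex.exp (-(p l0) * ((r:ℂ)*u)) := by
            rw [← Complex.exp_add]; congr 1; ring
          rw [hF]
          rw [hre]
          ring
      have hsum2 : Tendsto (fun r : ℝ => ∑ m ∈ S, F m r) atTop
          (𝓝 (∑ m ∈ S, if m = l0 then L else 0)) := tendsto_finset_sum _ hterm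
      have hsum3 : (∑ m ∈ S, if m = l0 then L else 0) = L := by
        rw [Finset.sum_ite_eq' S l0 (fun _ => L), if_pos hl0]
      rw [hsum3] at hsum2
      have hev : (fun r : ℝ => ∑ m ∈ S, F m r) =ᶠ[atTop] (fun _ => (0:ℂ)) := by
        filter_upwards [eventually_gt_atTop 0] with r hr
        have hw : ((r:ℂ)*u) ≠ 0 :=
          mul_ne_zero (by exact_mod_cast hr.ne') hu
        have h0 := hsum ((r:ℂ)*u) hw
        simp only [hF]
        rw [← Finset.sum_mul, ← Finset.sum_mul, h0, zero_mul, zero_mul]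
      exact tendsto_nhds_unique (hsum2.congr' hev) tendsto_const_nhds
    -- Step 1 : C l0 = 0
    have hI := winv_tendsto u hu
    have hE := expqw_tendsto (q l0) u hu
    have hC0 : C l0 = 0 := by
      apply main (-1) (Or.inl rfl)
      have T : Tendsto (fun r : ℝ => (A l0 * ((r:ℂ)*u)⁻¹ + C l0 +
          D l0 * ((r:ℂ)*u)⁻¹ * ((r:ℂ)*u)⁻¹) * Complex.exp (q l0 * ((r:ℂ)*u)⁻¹)) atTop
          (𝓝 ((A l0 * 0 + C l0 + D l0 * 0 * 0) * 1)) := by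
        exact (((hI.const_mul (A l0)).add tendsto_const_nhds).add
          ((hI.const_mul (D l0)).mul hI)).mul hE
      simp only [mul_zero, zero_mul, add_zero, zero_add, mul_one] at T
      refine T.congr' ?_
      filter_upwards [eventually_gt_atTop 0] with r hr
      have hw : ((r:ℂ)*u) ≠ 0 := mul_ne_zero (by exact_mod_cast hr.ne') hu
      have hr' : (r:ℂ) ≠ 0 := by exact_mod_cast hr.ne'
      rw [zpow_neg_one]
      field_simp
    -- Step 2 : A l0 = 0
    have hA0 : A l0 = 0 := by
      apply main 0 (Or.inr (Or.inl rfl))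
      have T : Tendsto (fun r : ℝ => (A l0 + D l0 * ((r:ℂ)*u)⁻¹) *
          Complex.exp (q l0 * ((r:ℂ)*u)⁻¹)) atTop (𝓝 ((A l0 + D l0 * 0) * 1)) :=
        (tendsto_const_nhds.add (hI.const_mul (D l0))).mul hE
      simp only [mul_zero, add_zero, mul_one] at T
      refine T.congr fun r => ?_
      rw [hC0, zpow_zero]
      ring
    -- Step 3 : D l0 = 0
    have hD0 : D l0 = 0 := by
      apply main 1 (Or.inr (Or.inr rfl))
      have T : Tendsto (fun r : ℝ => D l0 * Complex.exp (q l0 * ((r:ℂ)*u)⁻¹)) atTop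
          (𝓝 (D l0 * 1)) := hE.const_mul (D l0)
      simp only [mul_one] at T
      refine T.congr' ?_
      filter_upwards [eventually_gt_atTop 0] with r hr
      have hw : ((r:ℂ)*u) ≠ 0 := mul_ne_zero (by exact_mod_cast hr.ne') hu
      have hr' : (r:ℂ) ≠ 0 := by exact_mod_cast hr.ne'
      rw [hC0, hA0, zpow_one]
      field_simp
      ring
    by_cases hll0 : l = l0
    · exact hll0 ▸ ⟨hA0, hC0, hD0⟩
    · refine ih (S.erase l0) (Finset.erase_ssubset hl0) (hp.mono ?_) ?_ l
        (Finset.mem_erase.mpr ⟨hll0, hl⟩)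
      · intro x hx; exact Finset.mem_coe.mpr (Finset.mem_of_mem_erase (Finset.mem_coe.mp hx))
      · intro w hw
        have h0 := hsum w hw
        rw [← Finset.sum_erase_add S _ hl0, hA0, hC0, hD0] at h0
        simpa using h0

lemma theta_good (kp km : ℝ) (hkp : 0 < kp) (hkm : 0 < km) (hne : kp ≠ km) (φ : ℝ)
    (hφ : φ ∈ Set.Ioo (3*Real.pi/2 - min (kp/km) 1 / 2) (3*Real.pi/2 + min (kp/km) 1 / 2)) :
    ∃ θ ∈ Sarc kp km, vdir kp km θ 0 = Real.cos φ ∧ vdir kp km θ 1 = Real.sin φ ∧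
      Qco kp km θ ≠ 0 := by
  have hpi := Real.pi_gt_three
  set μ : ℝ := kp / km with hμdef
  clear_value μ
  have hμ : 0 < μ := hμdef ▸ div_pos hkp hkm
  set δ : ℝ := min μ 1 / 2 with hδdef
  clear_value δ
  have hδpos : 0 < δ := by
    rw [hδdef]
    have : 0 < min μ 1 := lt_min hμ one_pos
    linarith
  have hδ1 : δ ≤ 1/2 := by
    simp only [hδdef]
    have := min_le_right μ 1
    linarith
  set ψ : ℝ := φ - 3*Real.pi/2 with hψdef
  clear_value ψ
  have hψ : |ψ| < δ := by
    rw [abs_lt]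
    obtain ⟨h1, h2⟩ := hφ
    constructor <;> simp only [hψdef] <;> linarith
  have hφψ : φ = 3*Real.pi/2 + ψ := by simp [hψdef]
  have h32c : Real.cos (3*Real.pi/2) = 0 := by
    rw [show (3*Real.pi/2 : ℝ) = Real.pi + Real.pi/2 by ring, Real.cos_add]
    simp
  have h32s : Real.sin (3*Real.pi/2) = -1 := by
    rw [show (3*Real.pi/2 : ℝ) = Real.pi + Real.pi/2 by ring, Real.sin_add]
    simp
  have hcosφ : Real.cos φ = Real.sin ψ := by
    rw [hφψ, Real.cos_add, h32c, h32s]; ring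
  have hsinφ : Real.sin φ = -Real.cos ψ := by
    rw [hφψ, Real.sin_add, h32c, h32s]; ring
  have hcosabs : |Real.cos φ| < δ := by
    rw [hcosφ]
    exact lt_of_le_of_lt Real.abs_sin_le_abs hψ
  have hcosψpos : 0 < Real.cos ψ := by
    apply Real.cos_pos_of_mem_Ioo
    obtain ⟨hψ1, hψ2⟩ := abs_lt.mp hψ
    constructor
    · linarith
    · linarith
  have hsinneg : Real.sin φ < 0 := by rw [hsinφ]; linarith
  set t : ℝ := Real.cos φ / μ with htdef
  clear_value t
  have ht1 : |t| < 1 := by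
    rw [htdef, abs_div, abs_of_pos hμ, div_lt_one hμ]
    rcases le_or_gt μ 1 with h | h
    · have hh : δ = μ/2 := by rw [hδdef, min_eq_left h]
      rw [hh] at hcosabs; linarith
    · have hh : δ = 1/2 := by rw [hδdef, min_eq_right h.le]
      rw [hh] at hcosabs; linarith
  have ht1' : -1 < t := by rw [abs_lt] at ht1; linarith [ht1.1]
  have ht1'' : t < 1 := by rw [abs_lt] at ht1; linarith [ht1.2]
  set θ : ℝ := 2*Real.pi - Real.arccos t with hθdef
  clear_value θ
  have hcosθ : Real.cos θ = t := by
    rw [hθdef, Real.cos_sub, Real.cos_two_pi, Real.sin_two_pi,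
      Real.cos_arccos ht1'.le ht1''.le]
    ring
  have hsqrtpos : 0 < Real.sqrt (1 - t^2) := by
    apply Real.sqrt_pos.mpr
    nlinarith [abs_nonneg t, sq_abs t, ht1]
  have hsinθ : Real.sin θ = -Real.sqrt (1 - t^2) := by
    rw [hθdef, Real.sin_sub, Real.cos_two_pi, Real.sin_two_pi, Real.sin_arccos]
    ring
  have hsinθneg : Real.sin θ < 0 := by rw [hsinθ]; linarith
  have hbound : thetaC kp km < Real.arccos t ∧ Real.arccos t < Real.pi - thetaC kp km := by
    rw [thetaC]
    by_cases h : km < kp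
    · rw [if_pos h]
      have hr1 : (0:ℝ) < km/kp := div_pos hkm hkp
      have hr2 : km/kp < 1 := (div_lt_one hkp).mpr h
      have hμgt : 1 < μ := by rw [hμdef, lt_div_iff₀ hkm]; linarith
      have hδeq : δ = 1/2 := by rw [hδdef, min_eq_right hμgt.le]
      have htsm : |t| < km/kp := by
        rw [htdef, abs_div, abs_of_pos hμ, hμdef, div_lt_iff₀ (by positivity)]
        calc |Real.cos φ| < 1 := by rw [hδeq] at hcosabs; linarith
          _ ≤ km / kp * (kp / km) := by
              rw [show km / kp * (kp / km) = 1 by field_simp]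
      rw [abs_lt] at htsm
      constructor
      · exact Real.strictAntiOn_arccos ⟨by linarith, by linarith⟩
          ⟨by linarith, by linarith⟩ htsm.2
      · rw [show Real.pi - Real.arccos (km/kp) = Real.arccos (-(km/kp)) by
          rw [Real.arccos_neg]]
        exact Real.strictAntiOn_arccos ⟨by linarith, by linarith⟩
          ⟨by linarith, by linarith⟩ htsm.1
    · rw [if_neg h]
      constructor
      · exact Real.arccos_pos.mpr ht1''
      · rw [sub_zero]
        refine lt_of_le_of_ne (Real.arccos_le_pi t) fun hcon => ?_
        rw [Real.arccos_eq_pi] at hcon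
        linarith
  have harcmem : θ ∈ Sarc kp km := by
    rw [Sarc, Set.mem_Ioo, hθdef]
    constructor
    · linarith [hbound.2]
    · linarith [hbound.1]
  have hv0 : vdir kp km θ 0 = Real.cos φ := by
    simp only [vdir, if_pos rfl, hcosθ, ↓reduceIte]
    rw [htdef, ← hμdef]
    field_simp
  have hv1 : vdir kp km θ 1 = Real.sin φ := by
    have h10 : (1 : Fin 2) ≠ 0 := by decide
    simp only [vdir, if_neg h10]
    rw [Real.sign_of_neg hsinθneg, hcosθ, ← hμdef]
    have hμt : μ^2 * t^2 = Real.cos φ ^ 2 := by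
      rw [htdef]; field_simp
    rw [hμt, show (1 : ℝ) - Real.cos φ ^2 = Real.sin φ ^2 by
      have := Real.sin_sq_add_cos_sq φ; linarith]
    rw [Real.sqrt_sq_eq_abs, abs_of_neg hsinneg]
    ring
  have hQ : Qco kp km θ ≠ 0 := by
    rw [Qco, hv1, ← hμdef]
    apply div_ne_zero
    · exact (mul_neg_of_pos_of_neg (by linarith : (0:ℝ) < 2*μ) hsinθneg).ne
    · have h2 : μ * Real.sin θ < 0 := mul_neg_of_pos_of_neg hμ hsinθneg
      exact (by linarith : μ * Real.sin θ + Real.sin φ < 0).ne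
  exact ⟨θ, harcmem, hv0, hv1, hQ⟩

/-- for distinct points `s₁, …, s_M` in the lower half-plane, the `3M` functions
`g₁, …, g_M, h_{1,1}, h_{1,2}, …, h_{M,1}, h_{M,2}`, viewed as (continuous) functions of the
angle on the arc `Ŝ`, are linearly independent over `ℂ`. -/
theorem stmt7_linear_independence (kp km : ℝ) (hkp : 0 < kp) (hkm : 0 < km) (hne : kp ≠ km)
    (M : ℕ) (hM : 1 ≤ M) (s : Fin M → R2)
    (hs : Function.Injective s) (hlower : ∀ l, s l 1 < 0)
    (a : Fin M → ℂ) (b : Fin M → Fin 2 → ℂ)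
    (hvanish : ∀ θ ∈ Sarc kp km,
      (∑ l, a l * gfun kp km (s l) θ) + (∑ l, ∑ j, b l j * hfun kp km (s l) j θ) = 0) :
    a = 0 ∧ b = 0 := by
  classical
  set F : ℂ → ℂ := fun z => ∑ l, (a l + b l 0 * Complex.cos z + b l 1 * Complex.sin z) *
      Complex.exp (-(Complex.I * (km:ℂ) *
        (((s l 0 : ℝ):ℂ) * Complex.cos z + ((s l 1 : ℝ):ℂ) * Complex.sin z))) with hFdef
  -- Step 1 : F vanishes on a real interval
  have hF0 : ∀ φ : ℝ, φ ∈ Set.Ioo (3*Real.pi/2 - min (kp/km) 1 / 2)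
      (3*Real.pi/2 + min (kp/km) 1 / 2) → F (φ:ℂ) = 0 := by
    intro φ hφ
    obtain ⟨θ, hθmem, hv0, hv1, hQ⟩ := theta_good kp km hkp hkm hne φ hφ
    have hv := hvanish θ hθmem
    have hcombine : (Qco kp km θ : ℂ) * (∑ l, ((a l + b l 0 * ((vdir kp km θ 0 : ℝ):ℂ)
        + b l 1 * ((vdir kp km θ 1 : ℝ):ℂ)) *
        Complex.exp (-(Complex.I * (km:ℂ) * ((dotp (vdir kp km θ) (s l) : ℝ):ℂ))))) = 0 := by
      rw [← hv, Finset.mul_sum, ← Finset.sum_add_distrib]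
      apply Finset.sum_congr rfl
      intro l _
      rw [Fin.sum_univ_two]
      simp only [gfun, hfun]
      ring
    have hQc : (Qco kp km θ : ℂ) ≠ 0 := Complex.ofReal_ne_zero.mpr hQ
    have hsum0 := (mul_eq_zero.mp hcombine).resolve_left hQc
    simp only [hFdef]
    rw [← hsum0]
    apply Finset.sum_congr rfl
    intro l _
    have hdot : ((dotp (vdir kp km θ) (s l) : ℝ):ℂ)
        = ((s l 0 : ℝ):ℂ) * Complex.cos (φ:ℂ) + ((s l 1 : ℝ):ℂ) * Complex.sin (φ:ℂ) := by
      rw [dotp, hv0, hv1]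
      push_cast
      ring
    rw [hdot, hv0, hv1, Complex.ofReal_cos, Complex.ofReal_sin]
  -- Step 2 : F is entire, hence vanishes identically
  have hFdiff : Differentiable ℂ F := by
    rw [hFdef]

    apply Differentiable.fun_sum
    intro l _
    exact (((differentiable_const _).add
        ((differentiable_const _).mul Complex.differentiable_cos)).add
        ((differentiable_const _).mul Complex.differentiable_sin)).mul
      (((differentiable_const _).mul
        (((differentiable_const _).mul Complex.differentiable_cos).add
         ((differentiable_const _).mul Complex.differentiable_sin))).neg.cexp)
  have hFanalytic : AnalyticOnNhd ℂ F Set.univ :=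
    hFdiff.differentiableOn.analyticOnNhd isOpen_univ
  have hδpos : 0 < min (kp/km) 1 / 2 := by
    have : 0 < min (kp/km) 1 := lt_min (div_pos hkp hkm) one_pos
    linarith
  set δ : ℝ := min (kp/km) 1 / 2 with hδdef
  have hfreq : ∃ᶠ z in nhdsWithin ((3*Real.pi/2 : ℝ):ℂ) {((3*Real.pi/2 : ℝ):ℂ)}ᶜ,
      F z = 0 := by
    have hx : Tendsto (fun n : ℕ => 3*Real.pi/2 + δ/((n:ℝ)+2)) atTop
        (nhds (3*Real.pi/2)) := by
      have h1 : Tendsto (fun n : ℕ => ((n:ℝ)+2)) atTop atTop :=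
        tendsto_atTop_add_const_right _ 2 tendsto_natCast_atTop_atTop
      have h2 : Tendsto (fun n : ℕ => δ/((n:ℝ)+2)) atTop (nhds 0) := by
        simpa [div_eq_mul_inv] using h1.inv_tendsto_atTop.const_mul δ
      simpa using tendsto_const_nhds.add h2
    have hseq : Tendsto (fun n : ℕ => (((3*Real.pi/2 + δ/((n:ℝ)+2) : ℝ)) : ℂ)) atTop
        (nhdsWithin ((3*Real.pi/2 : ℝ):ℂ) {((3*Real.pi/2 : ℝ):ℂ)}ᶜ) := by
      rw [tendsto_nhdsWithin_iff]
      refine ⟨(Complex.continuous_ofReal.tendsto _).comp hx, ?_⟩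
      apply Eventually.of_forall
      intro n
      simp only [Set.mem_compl_iff, Set.mem_singleton_iff]
      intro hcon
      have h5 := Complex.ofReal_injective hcon
      have h6 : (0:ℝ) < δ/((n:ℝ)+2) := by positivity
      linarith
    apply hseq.frequently
    apply Eventually.frequently
    apply Eventually.of_forall
    intro n
    apply hF0
    have h6 : (0:ℝ) < δ/((n:ℝ)+2) := by positivity
    have h7 : δ/((n:ℝ)+2) < δ := div_lt_self hδpos (by
      have : (0:ℝ) ≤ (n:ℝ) := Nat.cast_nonneg n
      linarith)
    exact Set.mem_Ioo.mpr ⟨by linarith, by linarith⟩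
  have hFzero : ∀ z : ℂ, F z = 0 := fun z =>
    hFanalytic.eqOn_zero_of_preconnected_of_frequently_eq_zero isPreconnected_univ
      (Set.mem_univ _) hfreq (Set.mem_univ z)
  -- Step 3 : reduction to the key lemma
  have hpinj : Set.InjOn (fun l : Fin M =>
      -(Complex.I * (km:ℂ)) * (((s l 0 : ℝ):ℂ) - Complex.I * ((s l 1 : ℝ):ℂ)) / 2)
      (Finset.univ : Finset (Fin M)) := by
    intro l _ m _ h
    simp only at h
    have hc : -(Complex.I * (km:ℂ)) ≠ 0 :=
      neg_ne_zero.mpr (mul_ne_zero Complex.I_ne_zero (Complex.ofReal_ne_zero.mpr hkm.ne'))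
    have h2 : ((s l 0 : ℝ):ℂ) - Complex.I * ((s l 1 : ℝ):ℂ)
        = ((s m 0 : ℝ):ℂ) - Complex.I * ((s m 1 : ℝ):ℂ) := by
      apply mul_left_cancel₀ hc
      linear_combination 2 * h
    have h3 := congrArg Complex.re h2
    have h4 := congrArg Complex.im h2
    simp only [Complex.sub_re, Complex.sub_im, Complex.mul_re, Complex.mul_im,
      Complex.I_re, Complex.I_im, Complex.ofReal_re, Complex.ofReal_im] at h3 h4
    apply hs
    ext i
    fin_cases i
    · simpa using h3
    · have : s l 1 = s m 1 := by linarith [h4]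
      simpa using this
  have hW : ∀ w : ℂ, w ≠ 0 → ∑ m, (a m + ((b m 0 - Complex.I * b m 1)/2) * w
      + ((b m 0 + Complex.I * b m 1)/2) * w⁻¹) *
      Complex.exp ((-(Complex.I * (km:ℂ)) * (((s m 0 : ℝ):ℂ) - Complex.I * ((s m 1 : ℝ):ℂ)) / 2) * w
        + (-(Complex.I * (km:ℂ)) * (((s m 0 : ℝ):ℂ) + Complex.I * ((s m 1 : ℝ):ℂ)) / 2) * w⁻¹) = 0 := by
    intro w hw
    obtain ⟨z, hz⟩ : ∃ z, Complex.exp z = w := by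
      have : w ∈ Set.range Complex.exp := by rw [Complex.range_exp]; exact hw
      exact this
    set ζ : ℂ := -Complex.I * z with hζdef
    have hζI : ζ * Complex.I = z := by
      rw [hζdef, show -Complex.I * z * Complex.I = -(Complex.I*Complex.I) * z by ring,
        Complex.I_mul_I]
      ring
    have hexpI : Complex.exp (ζ * Complex.I) = w := by rw [hζI, hz]
    have hexpnI : Complex.exp (-ζ * Complex.I) = w⁻¹ := by
      rw [show -ζ * Complex.I = -(ζ * Complex.I) by ring, Complex.exp_neg, hexpI]
    have hcos : Complex.cos ζ = (w + w⁻¹)/2 := by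
      rw [Complex.cos, hexpI, hexpnI]
    have hsin : Complex.sin ζ = (w⁻¹ - w) * Complex.I / 2 := by
      rw [Complex.sin, hexpI, hexpnI]
    have h := hFzero ζ
    simp only [hFdef] at h
    rw [← h]

    apply Finset.sum_congr rfl
    intro m _
    rw [hcos, hsin]
    congr 1
    · ring
    · congr 1
      ring
  have hkey := key_lemma
      (fun l : Fin M => -(Complex.I * (km:ℂ)) * (((s l 0 : ℝ):ℂ) - Complex.I * ((s l 1 : ℝ):ℂ)) / 2)
      (fun l : Fin M => -(Complex.I * (km:ℂ)) * (((s l 0 : ℝ):ℂ) + Complex.I * ((s l 1 : ℝ):ℂ)) / 2)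
      a (fun l => (b l 0 - Complex.I * b l 1)/2) (fun l => (b l 0 + Complex.I * b l 1)/2)
      Finset.univ hpinj hW
  constructor
  · funext l
    exact (hkey l (Finset.mem_univ l)).1
  · funext l j
    obtain ⟨hA, hC, hD⟩ := hkey l (Finset.mem_univ l)
    have h1 : b l 0 - Complex.I * b l 1 = 0 := by linear_combination 2 * hC
    have h2 : b l 0 + Complex.I * b l 1 = 0 := by linear_combination 2 * hD
    have hb0 : b l 0 = 0 := by linear_combination (h1 + h2)/2
    have hbI : Complex.I * b l 1 = 0 := by linear_combination (h2 - h1)/2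
    have hb1 : b l 1 = 0 := (mul_eq_zero.mp hbI).resolve_left Complex.I_ne_zero
    fin_cases j
    · simpa using hb0
    · simpa using hb1
end
end
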